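/- Let p, q, r, s ∈ (1,∞) with 1/p + 1/q + 1/r + 1/s = 3, and β ∈ (0,1]. For f ∈ L^p(ℝ₊), g ∈ L^q(ℝ₊), h ∈ L_r^{0,β}(ℝ₊), k ∈ L^s(ℝ₊), one has |∫₀^∞ P(f,g,h)(x)·k(x) dx| ≤ √(2/π)·(sech t)^{1-1/r} ‖f‖_{L^p} ‖g‖_{L^q} ‖h‖_{L_r^{0,β}} ‖k‖_{L^s}, where sech t = 1/cosh t with cosh t = min{cosh(x-u+v), cosh(x-u-v), cosh(x+u+v), cosh(x+u-v)}. -/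

import Mathlib

/-
`|Φ|` is dominated by `phiMajorant`, the sum of its four exponentials. The majorant is symmetric
in `x, u, v` (each exponential is even in its second argument), its integral over `(0, ∞)` in any
one of `x, u, v` is `4 K₀(w)` (a half-line and its mirror image through a point cover the line),
and its integral in `w` is at most `4 sech t`. Since `1/p + 1/q + 1/r + 1/s = 3`, the weights
`1 - 1/p, …, 1 - 1/s` add up to `1`, and the integrand is the product of the four functions
`(majorant · |g|^q |h|^r |k|^s)^(1 - 1/p)`, …, each omitting the function whose exponent it carries.
Hölder's inequality for these four functions on `(0, ∞)⁴`, followed by Tonelli in the variable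
each of them leaves free, gives the bound.
-/

open MeasureTheory Set Filter

noncomputable def K0 (w : ℝ) : ℝ := ∫ t in Ioi (0:ℝ), Real.exp (-w * Real.cosh t)

noncomputable def Phi (x u v w : ℝ) : ℝ :=
  Real.exp (-w * Real.cosh (x - u + v)) + Real.exp (-w * Real.cosh (x - u - v))
    - Real.exp (-w * Real.cosh (x + u + v)) - Real.exp (-w * Real.cosh (x + u - v))

noncomputable def Kiy (y w : ℝ) : ℝ :=
  ∫ t in Ioi (0:ℝ), Real.exp (-w * Real.cosh t) * Real.cos (y * t)

noncomputable def polyconv (f g h : ℝ → ℝ) (x : ℝ) : ℝ :=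
  (1 / (2 * Real.sqrt (2 * Real.pi))) *
    ∫ u in Ioi (0:ℝ), ∫ v in Ioi (0:ℝ), ∫ w in Ioi (0:ℝ),
      Phi x u v w * f u * g v * h w

noncomputable def Fs (f : ℝ → ℝ) (y : ℝ) : ℝ :=
  Real.sqrt (2 / Real.pi) * ∫ x in Ioi (0:ℝ), Real.sin (x * y) * f x

noncomputable def Fc (f : ℝ → ℝ) (y : ℝ) : ℝ :=
  Real.sqrt (2 / Real.pi) * ∫ x in Ioi (0:ℝ), Real.cos (x * y) * f x

noncomputable def KLtr (h : ℝ → ℝ) (y : ℝ) : ℝ := ∫ w in Ioi (0:ℝ), Kiy y w * h w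

noncomputable def watson (g0 h0 f : ℝ → ℝ) (x : ℝ) : ℝ :=
  polyconv f g0 h0 x - deriv (deriv (polyconv f g0 h0)) x

noncomputable def sconv (f φ : ℝ → ℝ) (x : ℝ) : ℝ :=
  (1 / Real.sqrt (2 * Real.pi)) * ∫ u in Ioi (0:ℝ), f u * (φ |x - u| - φ (x + u))

noncomputable def coshMin (x u v : ℝ) : ℝ :=
  min (min (Real.cosh (x - u + v)) (Real.cosh (x - u - v)))
      (min (Real.cosh (x + u + v)) (Real.cosh (x + u - v)))

open scoped ENNReal

section Integration

variable {α β γ δ : Type*} [MeasurableSpace α] [MeasurableSpace β] [MeasurableSpace γ]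
  [MeasurableSpace δ] {μ : Measure α} {ν : Measure β}

lemma setLIntegral_Ioi_comp_add_add_comp_sub (φ : ℝ → ℝ≥0∞) (c : ℝ) :
    (∫⁻ y in Ioi 0, φ (c + y)) + ∫⁻ y in Ioi 0, φ (c - y) = ∫⁻ y, φ y := by
  have hreflect : ∫⁻ y in Ioi 0, φ (c - y) = ∫⁻ y in Iio 0, φ (c + y) := by
    simpa [sub_eq_add_neg] using
      (Measure.measurePreserving_neg (volume : Measure ℝ)).setLIntegral_comp_preimage_emb
        (Homeomorph.neg ℝ).measurableEmbedding (fun y => φ (c + y)) (Iio 0)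
  rw [hreflect, add_comm, ← lintegral_union measurableSet_Ioi Ioi_disjoint_Iio_same.symm,
    Iio_union_Ioi, restrict_compl_singleton, lintegral_add_left_eq_self]

lemma lintegral_eq_two_mul_setLIntegral_Ioi_of_even {φ : ℝ → ℝ≥0∞} (hφ : ∀ y, φ (-y) = φ y) :
    ∫⁻ y, φ y = 2 * ∫⁻ y in Ioi 0, φ y := by
  simpa [hφ, two_mul] using (setLIntegral_Ioi_comp_add_add_comp_sub φ 0).symm

lemma aemeasurable_enorm_of_rpow {φ : α → ℝ} {e : ℝ} (he : 0 < e)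
    (hφ : AEMeasurable (fun x => |φ x| ^ e) μ) : AEMeasurable (fun x => ‖φ x‖ₑ) μ := by
  have h : (fun x => ‖φ x‖ₑ) = fun x => ENNReal.ofReal ((|φ x| ^ e) ^ e⁻¹) := by
    funext x
    rw [Real.rpow_rpow_inv (abs_nonneg _) he.ne', Real.enorm_eq_ofReal_abs]
  rw [h]
  exact (hφ.pow_const _).ennreal_ofReal

lemma lintegral_rpow_eq_ofReal_integral {φ : α → ℝ} {Φ : α → ℝ≥0∞} {e : ℝ}
    (hΦ : Φ =ᵐ[μ] fun x => ‖φ x‖ₑ) (he : 0 ≤ e) (hint : Integrable (fun x => |φ x| ^ e) μ) :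
    ∫⁻ x, Φ x ^ e ∂μ = ENNReal.ofReal (∫ x, |φ x| ^ e ∂μ) := by
  rw [ofReal_integral_eq_lintegral_ofReal hint (Eventually.of_forall fun _ => by positivity)]
  refine lintegral_congr_ae (hΦ.mono fun x hx => ?_)
  dsimp only at hx ⊢
  rw [hx, Real.enorm_eq_ofReal_abs, ENNReal.ofReal_rpow_of_nonneg (abs_nonneg _) he]

lemma lintegral_prod_mul_snd_le [SFinite μ] [SFinite ν] {A : α × β → ℝ≥0∞} (hA : Measurable A)
    {Ψ m : β → ℝ≥0∞} (hΨ : Measurable Ψ) (hm : ∀ᵐ y ∂ν, ∫⁻ x, A (x, y) ∂μ ≤ m y) :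
    ∫⁻ z, A z * Ψ z.2 ∂μ.prod ν ≤ ∫⁻ y, m y * Ψ y ∂ν := by
  rw [lintegral_prod_symm (fun z => A z * Ψ z.2) (hA.mul (hΨ.comp measurable_snd)).aemeasurable]
  refine lintegral_mono_ae (hm.mono fun y hy => ?_)
  exact (lintegral_mul_const _ (hA.comp measurable_prodMk_right)).trans_le
    (mul_le_mul_left hy _)

lemma lintegral_prod_mul_fst_le [SFinite ν] {A : α × β → ℝ≥0∞} (hA : Measurable A)
    {Ψ m : α → ℝ≥0∞} (hΨ : Measurable Ψ) (hm : ∀ᵐ x ∂μ, ∫⁻ y, A (x, y) ∂ν ≤ m x) :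
    ∫⁻ z, A z * Ψ z.1 ∂μ.prod ν ≤ ∫⁻ x, m x * Ψ x ∂μ := by
  rw [lintegral_prod (fun z => A z * Ψ z.1) (hA.mul (hΨ.comp measurable_fst)).aemeasurable]
  refine lintegral_mono_ae (hm.mono fun x hx => ?_)
  exact (lintegral_mul_const _ (hA.comp measurable_prodMk_left)).trans_le
    (mul_le_mul_left hx _)

lemma lintegral_prod_prod_mul_mul [SFinite ν] {ρ : Measure γ} [SFinite ρ] {F : α → ℝ≥0∞}
    {G : β → ℝ≥0∞} {H : γ → ℝ≥0∞} (hF : AEMeasurable F μ) (hG : AEMeasurable G ν)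
    (hH : AEMeasurable H ρ) :
    ∫⁻ y, F y.1 * G y.2.1 * H y.2.2 ∂μ.prod (ν.prod ρ)
      = (∫⁻ x, F x ∂μ) * (∫⁻ x, G x ∂ν) * ∫⁻ x, H x ∂ρ := by
  simp only [mul_assoc]
  rw [lintegral_prod_mul (g := fun y : β × γ => G y.1 * H y.2) hF (hG.comp_fst.mul hH.comp_snd),
    lintegral_prod_mul hG hH]

lemma lintegral_prod_prod_prod [SFinite μ] {f : α × α × α × α → ℝ≥0∞} (hf : Measurable f) :
    ∫⁻ z, f z ∂μ.prod (μ.prod (μ.prod μ))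
      = ∫⁻ x, ∫⁻ u, ∫⁻ v, ∫⁻ w, f (x, u, v, w) ∂μ ∂μ ∂μ ∂μ := by
  rw [lintegral_prod _ hf.aemeasurable]
  refine lintegral_congr fun x => ?_
  rw [lintegral_prod (fun y => f (x, y)) (hf.comp measurable_prodMk_left).aemeasurable]
  refine lintegral_congr fun u => ?_
  rw [lintegral_prod (fun y => f (x, u, y))
    ((hf.comp measurable_prodMk_left).comp measurable_prodMk_left).aemeasurable]

lemma measurePreserving_prod_swap_left [SFinite μ] (ρ : Measure γ) [SFinite ρ] :
    MeasurePreserving (fun z : α × α × γ => (z.2.1, z.1, z.2.2))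
      (μ.prod (μ.prod ρ)) (μ.prod (μ.prod ρ)) :=
  (measurePreserving_prodAssoc μ μ ρ).comp ((Measure.measurePreserving_swap.prod
    (MeasurePreserving.id ρ)).comp ((measurePreserving_prodAssoc μ μ ρ).symm _))

lemma measurePreserving_prod_assoc_last [SFinite μ] [SFinite ν] {ρ : Measure γ}
    {κ : Measure δ} [SFinite ρ] [SFinite κ] :
    MeasurePreserving (fun z : (α × β × γ) × δ => (z.1.1, z.1.2.1, z.1.2.2, z.2))
      ((μ.prod (ν.prod ρ)).prod κ) (μ.prod (ν.prod (ρ.prod κ))) :=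
  ((MeasurePreserving.id μ).prod (measurePreserving_prodAssoc ν ρ κ)).comp
    (measurePreserving_prodAssoc μ (ν.prod ρ) κ)

end Integration

section Holder

lemma mul_rpow_factorization (A F G H K : ℝ≥0∞) {a b c d : ℝ} (ha : a ≤ 1) (hb : b ≤ 1)
    (hc : c ≤ 1) (hd : d ≤ 1) (habcd : a + b + c + d = 3) :
    A * (F ^ a * G ^ b * H ^ c * K ^ d)
      = (A * (G * H * K)) ^ (1 - a) * (A * (F * H * K)) ^ (1 - b)
        * (A * (F * G * K)) ^ (1 - c) * (A * (F * G * H)) ^ (1 - d) := by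
  have ha' : 0 ≤ 1 - a := by linarith
  have hb' : 0 ≤ 1 - b := by linarith
  have hc' : 0 ≤ 1 - c := by linarith
  have hd' : 0 ≤ 1 - d := by linarith
  calc A * (F ^ a * G ^ b * H ^ c * K ^ d)
      = A ^ ((1 - a) + (1 - b) + (1 - c) + (1 - d)) * (F ^ ((1 - b) + (1 - c) + (1 - d))
          * G ^ ((1 - a) + (1 - c) + (1 - d)) * H ^ ((1 - a) + (1 - b) + (1 - d))
          * K ^ ((1 - a) + (1 - b) + (1 - c))) := by
        rw [show (1 - a) + (1 - b) + (1 - c) + (1 - d) = 1 by linarith,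
          show (1 - b) + (1 - c) + (1 - d) = a by linarith,
          show (1 - a) + (1 - c) + (1 - d) = b by linarith,
          show (1 - a) + (1 - b) + (1 - d) = c by linarith,
          show (1 - a) + (1 - b) + (1 - c) = d by linarith, ENNReal.rpow_one]
    _ = _ := by
        simp (maxDischargeDepth := 4) only [ENNReal.rpow_add_of_nonneg,
          ENNReal.mul_rpow_of_nonneg, ha', hb', hc', hd', add_nonneg]
        ring

theorem lintegral_mul_rpow_le_of_add_eq_three {X : Type*} [MeasurableSpace X] {ν : Measure X}
    {A F G H K : X → ℝ≥0∞} (hA : AEMeasurable A ν) (hF : AEMeasurable F ν)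
    (hG : AEMeasurable G ν) (hH : AEMeasurable H ν) (hK : AEMeasurable K ν) {a b c d : ℝ}
    (ha : a ≤ 1) (hb : b ≤ 1) (hc : c ≤ 1) (hd : d ≤ 1) (habcd : a + b + c + d = 3) :
    ∫⁻ z, A z * (F z ^ a * G z ^ b * H z ^ c * K z ^ d) ∂ν
      ≤ (∫⁻ z, A z * (G z * H z * K z) ∂ν) ^ (1 - a)
        * (∫⁻ z, A z * (F z * H z * K z) ∂ν) ^ (1 - b)
        * (∫⁻ z, A z * (F z * G z * K z) ∂ν) ^ (1 - c)
        * (∫⁻ z, A z * (F z * G z * H z) ∂ν) ^ (1 - d) := by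
  simp only [mul_rpow_factorization _ _ _ _ _ ha hb hc hd habcd]
  have hHolder := ENNReal.lintegral_prod_norm_pow_le (μ := ν) Finset.univ
    (f := ![fun z => A z * (G z * H z * K z), fun z => A z * (F z * H z * K z),
      fun z => A z * (F z * G z * K z), fun z => A z * (F z * G z * H z)])
    (p := ![1 - a, 1 - b, 1 - c, 1 - d])
    (fun i _ => by fin_cases i <;> simp <;> fun_prop)
    (by simp [Fin.sum_univ_four]; linarith)
    (fun i _ => by fin_cases i <;> simp <;> linarith)
  simpa [Fin.prod_univ_four] using hHolder

lemma mul_rpow_factorization_weighted (C σ F G H K : ℝ≥0∞) {a b c d : ℝ} (ha : a ≤ 1)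
    (hb : b ≤ 1) (hc : c ≤ 1) (hd : d ≤ 1) (habcd : a + b + c + d = 3) :
    (C * (G * H * K)) ^ (1 - a) * (C * (F * H * K)) ^ (1 - b)
        * (C * σ * (F * G * K)) ^ (1 - c) * (C * (F * G * H)) ^ (1 - d)
      = C * σ ^ (1 - c) * F ^ a * G ^ b * H ^ c * K ^ d := by
  rw [mul_right_comm C σ, ENNReal.mul_rpow_of_nonneg _ _ (by linarith : 0 ≤ 1 - c)]
  calc _ = σ ^ (1 - c) * ((C * (G * H * K)) ^ (1 - a) * (C * (F * H * K)) ^ (1 - b)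
        * (C * (F * G * K)) ^ (1 - c) * (C * (F * G * H)) ^ (1 - d)) := by ring
    _ = _ := by rw [← mul_rpow_factorization _ _ _ _ _ ha hb hc hd habcd]; ring

end Holder

section Kernel

noncomputable def expCosh (w a : ℝ) : ℝ≥0∞ := ENNReal.ofReal (Real.exp (-w * Real.cosh a))

noncomputable def phiMajorant (x u v w : ℝ) : ℝ≥0∞ :=
  expCosh w (x - u + v) + expCosh w (x - u - v) + expCosh w (x + u + v) + expCosh w (x + u - v)

@[simp]
lemma expCosh_neg (w a : ℝ) : expCosh w (-a) = expCosh w a := by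
  simp [expCosh]

@[fun_prop]
lemma Measurable.expCosh {α : Type*} [MeasurableSpace α] {f g : α → ℝ} (hf : Measurable f)
    (hg : Measurable g) :
    Measurable fun x => expCosh (f x) (g x) := by
  unfold _root_.expCosh
  fun_prop

lemma measurable_phiMajorant :
    Measurable fun z : ℝ × ℝ × ℝ × ℝ => phiMajorant z.1 z.2.1 z.2.2.1 z.2.2.2 := by
  unfold phiMajorant
  fun_prop

lemma enorm_Phi_le (x u v w : ℝ) : ‖Phi x u v w‖ₑ ≤ phiMajorant x u v w := by
  have h : ∀ a, ‖Real.exp (-w * Real.cosh a)‖ₑ = expCosh w a := fun a =>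
    Real.enorm_of_nonneg (Real.exp_pos _).le
  calc ‖Phi x u v w‖ₑ
      ≤ ‖Real.exp (-w * Real.cosh (x - u + v))‖ₑ + ‖Real.exp (-w * Real.cosh (x - u - v))‖ₑ
        + ‖Real.exp (-w * Real.cosh (x + u + v))‖ₑ
        + ‖Real.exp (-w * Real.cosh (x + u - v))‖ₑ :=
        enorm_sub_le.trans (add_le_add (enorm_sub_le.trans
          (add_le_add (enorm_add_le _ _) le_rfl)) le_rfl)
    _ = phiMajorant x u v w := by simp only [h, phiMajorant]

lemma phiMajorant_swap (x u v w : ℝ) : phiMajorant u x v w = phiMajorant x u v w := by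
  simp only [phiMajorant]
  rw [← expCosh_neg w (u - x + v), ← expCosh_neg w (u - x - v)]
  ring_nf

lemma phiMajorant_cycle (x u v w : ℝ) : phiMajorant u v x w = phiMajorant x u v w := by
  simp only [phiMajorant]
  rw [← expCosh_neg w (u - v - x), ← expCosh_neg w (u + v - x)]
  ring_nf

lemma setLIntegral_phiMajorant_x (u v w : ℝ) :
    ∫⁻ x in Ioi 0, phiMajorant x u v w = 4 * ∫⁻ y in Ioi 0, expCosh w y := by
  have hsplit : ∀ x, phiMajorant x u v w = (expCosh w (u + v + x) + expCosh w (u + v - x))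
      + (expCosh w (u - v + x) + expCosh w (u - v - x)) := by
    intro x
    simp only [phiMajorant]
    rw [← expCosh_neg w (u + v - x), ← expCosh_neg w (u - v - x)]
    ring_nf
  simp only [hsplit]
  rw [lintegral_add_right _ (by fun_prop), lintegral_add_right _ (by fun_prop),
    lintegral_add_right _ (by fun_prop), setLIntegral_Ioi_comp_add_add_comp_sub,
    setLIntegral_Ioi_comp_add_add_comp_sub,
    lintegral_eq_two_mul_setLIntegral_Ioi_of_even (expCosh_neg w)]
  ring

lemma setLIntegral_expCosh_fst (a : ℝ) :
    ∫⁻ w in Ioi 0, expCosh w a = ENNReal.ofReal (1 / Real.cosh a) := by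
  have hc : -Real.cosh a < 0 := neg_neg_of_pos (Real.cosh_pos a)
  have he : ∀ w, Real.exp (-w * Real.cosh a) = Real.exp (-Real.cosh a * w) := fun w => by
    ring_nf
  simp only [expCosh, he]
  rw [← ofReal_integral_eq_lintegral_ofReal (integrableOn_exp_mul_Ioi hc 0)
    (Eventually.of_forall fun _ => (Real.exp_pos _).le), integral_exp_mul_Ioi hc]
  congr 1
  field_simp
  simp

lemma setLIntegral_phiMajorant_w_le {x u v t : ℝ} (h : Real.cosh t ≤ coshMin x u v) :
    ∫⁻ w in Ioi 0, phiMajorant x u v w ≤ 4 * ENNReal.ofReal (1 / Real.cosh t) := by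
  have hle : ∀ a, Real.cosh t ≤ Real.cosh a →
      ∫⁻ w in Ioi 0, expCosh w a ≤ ENNReal.ofReal (1 / Real.cosh t) := fun a ha => by
    rw [setLIntegral_expCosh_fst]
    exact ENNReal.ofReal_le_ofReal (one_div_le_one_div_of_le (Real.cosh_pos t) ha)
  simp only [coshMin, le_min_iff] at h
  unfold phiMajorant
  rw [lintegral_add_left (by fun_prop), lintegral_add_left (by fun_prop),
    lintegral_add_left (by fun_prop)]
  calc _ ≤ ENNReal.ofReal (1 / Real.cosh t) + ENNReal.ofReal (1 / Real.cosh t)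
        + ENNReal.ofReal (1 / Real.cosh t) + ENNReal.ofReal (1 / Real.cosh t) := by
        gcongr <;> exact hle _ (by tauto)
    _ = _ := by ring

lemma integrableOn_exp_neg_mul_cosh {c : ℝ} (hc : 0 < c) :
    IntegrableOn (fun t => Real.exp (-c * Real.cosh t)) (Ioi 0) := by
  refine (exp_neg_integrableOn_Ioi 0 hc).mono' (by fun_prop) ?_
  filter_upwards [ae_restrict_mem measurableSet_Ioi] with t ht
  rw [Real.norm_of_nonneg (Real.exp_pos _).le, Real.exp_le_exp]
  have : t ≤ Real.cosh t :=
    (Real.self_le_sinh_iff.2 (le_of_lt ht)).trans (Real.sinh_lt_cosh _).le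
  nlinarith

lemma ofReal_K0 {c : ℝ} (hc : 0 < c) : ENNReal.ofReal (K0 c) = ∫⁻ t in Ioi 0, expCosh c t :=
  ofReal_integral_eq_lintegral_ofReal (integrableOn_exp_neg_mul_cosh hc)
    (Eventually.of_forall fun _ => (Real.exp_pos _).le)

lemma K0_nonneg (c : ℝ) : 0 ≤ K0 c :=
  integral_nonneg fun _ => (Real.exp_pos _).le

lemma K0_pos {c : ℝ} (hc : 0 < c) : 0 < K0 c := by
  have : NeZero (volume.restrict (Ioi (0:ℝ))) := ⟨by simp⟩
  exact integral_exp_pos (integrableOn_exp_neg_mul_cosh hc)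

@[fun_prop]
lemma measurable_K0 : Measurable K0 :=
  (StronglyMeasurable.integral_prod_right' (f := fun p : ℝ × ℝ => Real.exp (-p.1 * Real.cosh p.2))
    (by fun_prop)).measurable

lemma K0_antitoneOn : AntitoneOn K0 (Ioi 0) := by
  intro a ha b _ hab
  refine integral_mono (integrableOn_exp_neg_mul_cosh (lt_of_lt_of_le ha hab))
    (integrableOn_exp_neg_mul_cosh ha) fun t => ?_
  simp only [Real.exp_le_exp, neg_mul, neg_le_neg_iff]
  exact mul_le_mul_of_nonneg_right hab (Real.cosh_pos t).le

end Kernel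

local notation "μ₊" => volume.restrict (Ioi (0:ℝ))

local notation "ν₃" => Measure.prod μ₊ (Measure.prod μ₊ μ₊)

-- A point `z` of `ν₄` is read as `(x, u, v, w) = (z.1, z.2.1, z.2.2.1, z.2.2.2)`.
local notation "ν₄" => Measure.prod μ₊ ν₃

lemma ae_pos_prod_prod : ∀ᵐ y ∂ν₃, 0 < y.1 ∧ 0 < y.2.1 ∧ 0 < y.2.2 := by
  rw [Measure.prod_restrict, Measure.prod_restrict]
  filter_upwards [ae_restrict_mem (measurableSet_Ioi.prod (measurableSet_Ioi.prod
    measurableSet_Ioi))] with y hy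
  simpa using hy

lemma lintegral_phiMajorant_mul_le_x {F G H : ℝ → ℝ≥0∞} (hF : Measurable F)
    (hG : Measurable G) (hH : Measurable H) :
    ∫⁻ z, phiMajorant z.1 z.2.1 z.2.2.1 z.2.2.2 * (F z.2.1 * G z.2.2.1 * H z.2.2.2) ∂ν₄
      ≤ 4 * ((∫⁻ u, F u ∂μ₊) * (∫⁻ v, G v ∂μ₊) * ∫⁻ w, H w * ENNReal.ofReal (K0 w) ∂μ₊) := by
  refine (lintegral_prod_mul_snd_le (Ψ := fun y => F y.1 * G y.2.1 * H y.2.2)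
    (m := fun y => 4 * ENNReal.ofReal (K0 y.2.2)) measurable_phiMajorant (by fun_prop)
    ?_).trans_eq ?_
  · filter_upwards [ae_pos_prod_prod] with y hy
    rw [setLIntegral_phiMajorant_x, ofReal_K0 hy.2.2]
  · rw [← lintegral_prod_prod_mul_mul (H := fun w => H w * ENNReal.ofReal (K0 w))
      hF.aemeasurable hG.aemeasurable (by fun_prop),
      ← lintegral_const_mul _ (by fun_prop)]
    congr 1 with y
    ring

lemma lintegral_phiMajorant_mul_le_u {G H K : ℝ → ℝ≥0∞} (hG : Measurable G)
    (hH : Measurable H) (hK : Measurable K) :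
    ∫⁻ z, phiMajorant z.1 z.2.1 z.2.2.1 z.2.2.2 * (G z.2.2.1 * H z.2.2.2 * K z.1) ∂ν₄
      ≤ 4 * ((∫⁻ v, G v ∂μ₊) * (∫⁻ w, H w * ENNReal.ofReal (K0 w) ∂μ₊) * ∫⁻ x, K x ∂μ₊) := by
  have hf : Measurable fun z : ℝ × ℝ × ℝ × ℝ =>
      phiMajorant z.1 z.2.1 z.2.2.1 z.2.2.2 * (G z.2.2.1 * H z.2.2.2 * K z.1) :=
    measurable_phiMajorant.mul (by fun_prop)
  calc _ = ∫⁻ z, phiMajorant z.2.1 z.1 z.2.2.1 z.2.2.2 * (G z.2.2.1 * H z.2.2.2 * K z.2.1) ∂ν₄ :=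
        ((measurePreserving_prod_swap_left _).lintegral_comp hf).symm
    _ = ∫⁻ z, phiMajorant z.1 z.2.1 z.2.2.1 z.2.2.2 * (K z.2.1 * G z.2.2.1 * H z.2.2.2) ∂ν₄ :=
        lintegral_congr fun z => by rw [phiMajorant_swap]; ring
    _ ≤ _ := lintegral_phiMajorant_mul_le_x hK hG hH
    _ = _ := by ring

lemma lintegral_phiMajorant_mul_le_v {F H K : ℝ → ℝ≥0∞} (hF : Measurable F)
    (hH : Measurable H) (hK : Measurable K) :
    ∫⁻ z, phiMajorant z.1 z.2.1 z.2.2.1 z.2.2.2 * (F z.2.1 * H z.2.2.2 * K z.1) ∂ν₄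
      ≤ 4 * ((∫⁻ u, F u ∂μ₊) * (∫⁻ w, H w * ENNReal.ofReal (K0 w) ∂μ₊) * ∫⁻ x, K x ∂μ₊) := by
  have hf : Measurable fun z : ℝ × ℝ × ℝ × ℝ =>
      phiMajorant z.1 z.2.1 z.2.2.1 z.2.2.2 * (F z.2.1 * H z.2.2.2 * K z.1) :=
    measurable_phiMajorant.mul (by fun_prop)
  have hcycle := ((MeasurePreserving.id μ₊).prod (measurePreserving_prod_swap_left μ₊)).comp
    (measurePreserving_prod_swap_left (μ := μ₊) (μ₊.prod μ₊))
  calc _ = ∫⁻ z, phiMajorant z.2.1 z.2.2.1 z.1 z.2.2.2 * (F z.2.2.1 * H z.2.2.2 * K z.2.1) ∂ν₄ :=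
        (hcycle.lintegral_comp hf).symm
    _ = ∫⁻ z, phiMajorant z.1 z.2.1 z.2.2.1 z.2.2.2 * (K z.2.1 * F z.2.2.1 * H z.2.2.2) ∂ν₄ :=
        lintegral_congr fun z => by rw [phiMajorant_cycle]; ring
    _ ≤ _ := lintegral_phiMajorant_mul_le_x hK hF hH
    _ = _ := by ring

lemma lintegral_phiMajorant_mul_le_w {t : ℝ}
    (ht : ∀ x u v : ℝ, 0 ≤ x → 0 ≤ u → 0 ≤ v → Real.cosh t ≤ coshMin x u v)
    {F G K : ℝ → ℝ≥0∞} (hF : Measurable F) (hG : Measurable G) (hK : Measurable K) :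
    ∫⁻ z, phiMajorant z.1 z.2.1 z.2.2.1 z.2.2.2 * (F z.2.1 * G z.2.2.1 * K z.1) ∂ν₄
      ≤ 4 * ENNReal.ofReal (1 / Real.cosh t)
        * ((∫⁻ u, F u ∂μ₊) * (∫⁻ v, G v ∂μ₊) * ∫⁻ x, K x ∂μ₊) := by
  have hf : Measurable fun z : ℝ × ℝ × ℝ × ℝ =>
      phiMajorant z.1 z.2.1 z.2.2.1 z.2.2.2 * (F z.2.1 * G z.2.2.1 * K z.1) :=
    measurable_phiMajorant.mul (by fun_prop)
  have hassoc := measurePreserving_prod_assoc_last (μ := μ₊) (ν := μ₊) (ρ := μ₊) (κ := μ₊)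
  have hA : Measurable fun a : (ℝ × ℝ × ℝ) × ℝ => phiMajorant a.1.1 a.1.2.1 a.1.2.2 a.2 :=
    by unfold phiMajorant; fun_prop
  have hm : ∀ᵐ y ∂ν₃, ∫⁻ w in Ioi 0, phiMajorant y.1 y.2.1 y.2.2 w
      ≤ 4 * ENNReal.ofReal (1 / Real.cosh t) := by
    filter_upwards [ae_pos_prod_prod] with y hy
    exact setLIntegral_phiMajorant_w_le (ht _ _ _ hy.1.le hy.2.1.le hy.2.2.le)
  calc _ = ∫⁻ a, phiMajorant a.1.1 a.1.2.1 a.1.2.2 a.2 * (F a.1.2.1 * G a.1.2.2 * K a.1.1)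
        ∂Measure.prod ν₃ μ₊ := (hassoc.lintegral_comp hf).symm
    _ ≤ ∫⁻ y, 4 * ENNReal.ofReal (1 / Real.cosh t) * (F y.2.1 * G y.2.2 * K y.1) ∂ν₃ :=
        lintegral_prod_mul_fst_le hA (by fun_prop) hm
    _ = 4 * ENNReal.ofReal (1 / Real.cosh t) * ∫⁻ y, K y.1 * F y.2.1 * G y.2.2 ∂ν₃ := by
        rw [lintegral_const_mul _ (by fun_prop)]
        congr 1
        exact lintegral_congr fun y => by ring
    _ = _ := by
        rw [lintegral_prod_prod_mul_mul hK.aemeasurable hF.aemeasurable hG.aemeasurable]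
        ring

theorem lintegral_phiMajorant_mul_le {p q r s t : ℝ} (hp : 1 ≤ p) (hq : 1 ≤ q) (hr : 1 ≤ r)
    (hs : 1 ≤ s) (hsum : 1 / p + 1 / q + 1 / r + 1 / s = 3)
    (ht : ∀ x u v : ℝ, 0 ≤ x → 0 ≤ u → 0 ≤ v → Real.cosh t ≤ coshMin x u v)
    {F G H K : ℝ → ℝ≥0∞} (hF : Measurable F) (hG : Measurable G) (hH : Measurable H)
    (hK : Measurable K) :
    ∫⁻ z, phiMajorant z.1 z.2.1 z.2.2.1 z.2.2.2 * (F z.2.1 * G z.2.2.1 * H z.2.2.2 * K z.1) ∂ν₄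
      ≤ 4 * ENNReal.ofReal (1 / Real.cosh t) ^ (1 - 1 / r) * (∫⁻ u, F u ^ p ∂μ₊) ^ (1 / p)
        * (∫⁻ v, G v ^ q ∂μ₊) ^ (1 / q) * (∫⁻ w, H w ^ r * ENNReal.ofReal (K0 w) ∂μ₊) ^ (1 / r)
        * (∫⁻ x, K x ^ s ∂μ₊) ^ (1 / s) := by
  have hinv : ∀ {e : ℝ}, 1 ≤ e → 1 / e ≤ 1 := fun he => (div_le_one (by linarith)).2 he
  have hroot : ∀ {e : ℝ}, 1 ≤ e → ∀ y : ℝ≥0∞, (y ^ e) ^ (1 / e) = y := fun he y => by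
    rw [one_div, ENNReal.rpow_rpow_inv (by linarith)]
  set sech := ENNReal.ofReal (1 / Real.cosh t)
  set IF := ∫⁻ u, F u ^ p ∂μ₊
  set IG := ∫⁻ v, G v ^ q ∂μ₊
  set IH := ∫⁻ w, H w ^ r * ENNReal.ofReal (K0 w) ∂μ₊
  set IK := ∫⁻ x, K x ^ s ∂μ₊
  calc _ = ∫⁻ z, phiMajorant z.1 z.2.1 z.2.2.1 z.2.2.2 * ((F z.2.1 ^ p) ^ (1 / p)
        * (G z.2.2.1 ^ q) ^ (1 / q) * (H z.2.2.2 ^ r) ^ (1 / r) * (K z.1 ^ s) ^ (1 / s)) ∂ν₄ := by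
        simp only [hroot hp, hroot hq, hroot hr, hroot hs]
    _ ≤ _ :=
        lintegral_mul_rpow_le_of_add_eq_three measurable_phiMajorant.aemeasurable
          (by fun_prop) (by fun_prop) (by fun_prop) (by fun_prop)
          (hinv hp) (hinv hq) (hinv hr) (hinv hs) hsum
    _ ≤ (4 * (IG * IH * IK)) ^ (1 - 1 / p) * (4 * (IF * IH * IK)) ^ (1 - 1 / q)
        * (4 * sech * (IF * IG * IK)) ^ (1 - 1 / r) * (4 * (IF * IG * IH)) ^ (1 - 1 / s) := by
        have h0 : ∀ {e : ℝ}, 1 ≤ e → 0 ≤ 1 - 1 / e := fun he => sub_nonneg.2 (hinv he)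
        gcongr ?_ ^ _ * ?_ ^ _ * ?_ ^ _ * ?_ ^ _
        · exact h0 hp
        · exact lintegral_phiMajorant_mul_le_u (by fun_prop) (by fun_prop) (by fun_prop)
        · exact h0 hq
        · exact lintegral_phiMajorant_mul_le_v (by fun_prop) (by fun_prop) (by fun_prop)
        · exact h0 hr
        · exact lintegral_phiMajorant_mul_le_w ht (by fun_prop) (by fun_prop) (by fun_prop)
        · exact h0 hs
        · exact lintegral_phiMajorant_mul_le_x (by fun_prop) (by fun_prop) (by fun_prop)
    _ = _ := mul_rpow_factorization_weighted _ _ _ _ _ _ (hinv hp) (hinv hq) (hinv hr) (hinv hs)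
        hsum

lemma enorm_polyconv_le (f g h : ℝ → ℝ) (x : ℝ) :
    ‖polyconv f g h x‖ₑ ≤ ENNReal.ofReal (1 / (2 * Real.sqrt (2 * Real.pi)))
      * ∫⁻ u in Ioi 0, ∫⁻ v in Ioi 0, ∫⁻ w in Ioi 0,
          phiMajorant x u v w * (‖f u‖ₑ * ‖g v‖ₑ * ‖h w‖ₑ) := by
  rw [polyconv, enorm_mul, Real.enorm_of_nonneg (by positivity)]
  gcongr
  refine enorm_integral_le_lintegral_enorm _ |>.trans <| lintegral_mono fun u => ?_
  refine enorm_integral_le_lintegral_enorm _ |>.trans <| lintegral_mono fun v => ?_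
  refine enorm_integral_le_lintegral_enorm _ |>.trans <| lintegral_mono fun w => ?_
  simp only [enorm_mul, mul_assoc]
  gcongr
  exact enorm_Phi_le x u v w

lemma ofReal_abs_integral_polyconv_mul_le_lintegral {f g h k : ℝ → ℝ} {F G H K : ℝ → ℝ≥0∞}
    (hF : F =ᵐ[μ₊] fun u => ‖f u‖ₑ) (hG : G =ᵐ[μ₊] fun v => ‖g v‖ₑ)
    (hH : H =ᵐ[μ₊] fun w => ‖h w‖ₑ) (hK : K =ᵐ[μ₊] fun x => ‖k x‖ₑ)
    (hFm : Measurable F) (hGm : Measurable G) (hHm : Measurable H) (hKm : Measurable K) :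
    ENNReal.ofReal |∫ x in Ioi 0, polyconv f g h x * k x|
      ≤ ENNReal.ofReal (1 / (2 * Real.sqrt (2 * Real.pi)))
        * ∫⁻ z, phiMajorant z.1 z.2.1 z.2.2.1 z.2.2.2
            * (F z.2.1 * G z.2.2.1 * H z.2.2.2 * K z.1) ∂ν₄ := by
  set C := ENNReal.ofReal (1 / (2 * Real.sqrt (2 * Real.pi)))
  have hm : Measurable fun z : ℝ × ℝ × ℝ × ℝ =>
      phiMajorant z.1 z.2.1 z.2.2.1 z.2.2.2 * (F z.2.1 * G z.2.2.1 * H z.2.2.2 * K z.1) :=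
    measurable_phiMajorant.mul (by fun_prop)
  rw [lintegral_prod_prod_prod hm,
    ← lintegral_const_mul' _ _ ENNReal.ofReal_ne_top, ← Real.enorm_eq_ofReal_abs]
  refine (enorm_integral_le_lintegral_enorm _).trans ?_
  calc ∫⁻ x in Ioi 0, ‖polyconv f g h x * k x‖ₑ
      ≤ ∫⁻ x in Ioi 0, C * (∫⁻ u in Ioi 0, ∫⁻ v in Ioi 0, ∫⁻ w in Ioi 0,
          phiMajorant x u v w * (‖f u‖ₑ * ‖g v‖ₑ * ‖h w‖ₑ)) * ‖k x‖ₑ :=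
        lintegral_mono fun x => by rw [enorm_mul]; gcongr; exact enorm_polyconv_le f g h x
    _ = ∫⁻ x in Ioi 0, C * ∫⁻ u in Ioi 0, ∫⁻ v in Ioi 0, ∫⁻ w in Ioi 0,
          phiMajorant x u v w * (‖f u‖ₑ * ‖g v‖ₑ * ‖h w‖ₑ * ‖k x‖ₑ) := by
        refine lintegral_congr fun x => ?_
        simp only [← lintegral_mul_const' _ _ enorm_ne_top, mul_assoc]
    _ = _ := by
        refine lintegral_congr_ae (hK.mono fun x hx => ?_)
        refine congrArg (C * ·) (lintegral_congr_ae (hF.mono fun u hu => ?_))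
        refine lintegral_congr_ae (hG.mono fun v hv => ?_)
        refine lintegral_congr_ae (hH.mono fun w hw => ?_)
        simp only [hx, hu, hv, hw]

lemma aemeasurable_abs_rpow_of_integrableOn_mul_K0 {φ : ℝ → ℝ} {β r : ℝ} (hβ : 0 < β)
    (hφ : IntegrableOn (fun x => |φ x| ^ r * K0 (β * x)) (Ioi 0)) :
    AEMeasurable (fun x => |φ x| ^ r) μ₊ := by
  refine (hφ.aestronglyMeasurable.aemeasurable.div
    (measurable_K0.comp (measurable_const_mul β)).aemeasurable).congr ?_
  filter_upwards [ae_restrict_mem measurableSet_Ioi] with x hx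
  simp [(K0_pos (mul_pos hβ hx)).ne']

lemma lintegral_rpow_mul_K0_le {φ : ℝ → ℝ} {Φ : ℝ → ℝ≥0∞} {β r : ℝ} (hβ : β ∈ Ioc 0 1)
    (hΦ : Φ =ᵐ[μ₊] fun x => ‖φ x‖ₑ) (hr : 0 ≤ r)
    (hint : IntegrableOn (fun x => |φ x| ^ r * K0 (β * x)) (Ioi 0)) :
    ∫⁻ x, Φ x ^ r * ENNReal.ofReal (K0 x) ∂μ₊
      ≤ ENNReal.ofReal (∫ x in Ioi 0, |φ x| ^ r * K0 (β * x)) := by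
  rw [ofReal_integral_eq_lintegral_ofReal hint
    (Eventually.of_forall fun _ => mul_nonneg (by positivity) (K0_nonneg _))]
  refine lintegral_mono_ae ?_
  filter_upwards [hΦ, ae_restrict_mem measurableSet_Ioi] with x hx hx0
  have hβx : β * x ≤ x := mul_le_of_le_one_left (le_of_lt hx0) hβ.2
  rw [hx, Real.enorm_eq_ofReal_abs, ENNReal.ofReal_rpow_of_nonneg (abs_nonneg _) hr,
    ← ENNReal.ofReal_mul (by positivity)]
  exact ENNReal.ofReal_le_ofReal (mul_le_mul_of_nonneg_left
    (K0_antitoneOn (mul_pos hβ.1 hx0) hx0 hβx) (by positivity))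

lemma ofReal_one_div_two_sqrt_two_pi_mul_four :
    ENNReal.ofReal (1 / (2 * Real.sqrt (2 * Real.pi))) * 4
      = ENNReal.ofReal (Real.sqrt (2 / Real.pi)) := by
  rw [← ENNReal.ofReal_ofNat 4, ← ENNReal.ofReal_mul (by positivity)]
  congr 1
  have hπ := Real.pi_pos
  rw [show (2 : ℝ) / Real.pi = 4 / (2 * Real.pi) by field_simp; ring,
    Real.sqrt_div' _ (by positivity),
    show (4 : ℝ) = 2 ^ 2 by norm_num, Real.sqrt_sq (by norm_num)]
  field_simp

theorem ofReal_abs_integral_polyconv_mul_le {p q r s β t : ℝ} (hp : 1 ≤ p) (hq : 1 ≤ q)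
    (hr : 1 ≤ r) (hs : 1 ≤ s) (hsum : 1 / p + 1 / q + 1 / r + 1 / s = 3) (hβ : β ∈ Ioc 0 1)
    {f g h k : ℝ → ℝ} (ht : ∀ x u v : ℝ, 0 ≤ x → 0 ≤ u → 0 ≤ v → Real.cosh t ≤ coshMin x u v)
    (hf : IntegrableOn (fun x => |f x| ^ p) (Ioi 0))
    (hg : IntegrableOn (fun x => |g x| ^ q) (Ioi 0))
    (hh : IntegrableOn (fun x => |h x| ^ r * K0 (β * x)) (Ioi 0))
    (hk : IntegrableOn (fun x => |k x| ^ s) (Ioi 0)) :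
    ENNReal.ofReal |∫ x in Ioi 0, polyconv f g h x * k x|
      ≤ ENNReal.ofReal (Real.sqrt (2 / Real.pi)) * ENNReal.ofReal (1 / Real.cosh t) ^ (1 - 1 / r)
        * ENNReal.ofReal (∫ x in Ioi 0, |f x| ^ p) ^ (1 / p)
        * ENNReal.ofReal (∫ x in Ioi 0, |g x| ^ q) ^ (1 / q)
        * ENNReal.ofReal (∫ x in Ioi 0, |h x| ^ r * K0 (β * x)) ^ (1 / r)
        * ENNReal.ofReal (∫ x in Ioi 0, |k x| ^ s) ^ (1 / s) := by
  obtain ⟨F, hFm, hF⟩ := aemeasurable_enorm_of_rpow (by linarith)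
    hf.aestronglyMeasurable.aemeasurable
  obtain ⟨G, hGm, hG⟩ := aemeasurable_enorm_of_rpow (by linarith)
    hg.aestronglyMeasurable.aemeasurable
  obtain ⟨H, hHm, hH⟩ := aemeasurable_enorm_of_rpow (by linarith)
    (aemeasurable_abs_rpow_of_integrableOn_mul_K0 hβ.1 hh)
  obtain ⟨K, hKm, hK⟩ := aemeasurable_enorm_of_rpow (by linarith)
    hk.aestronglyMeasurable.aemeasurable
  calc _ ≤ _ := ofReal_abs_integral_polyconv_mul_le_lintegral hF.symm hG.symm hH.symm hK.symm
        hFm hGm hHm hKm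
    _ ≤ _ := mul_le_mul_right (lintegral_phiMajorant_mul_le hp hq hr hs hsum ht hFm hGm hHm hKm) _
    _ ≤ _ := by
        rw [← ofReal_one_div_two_sqrt_two_pi_mul_four,
          lintegral_rpow_eq_ofReal_integral hF.symm (by linarith) hf,
          lintegral_rpow_eq_ofReal_integral hG.symm (by linarith) hg,
          lintegral_rpow_eq_ofReal_integral hK.symm (by linarith) hk]
        simp only [mul_assoc]
        gcongr
        exact lintegral_rpow_mul_K0_le hβ hH.symm (by linarith) hh

theorem stmt13 (p q r s β t : ℝ) (hp : 1 < p) (hq : 1 < q) (hr : 1 < r) (hs : 1 < s)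
    (hsum : 1/p + 1/q + 1/r + 1/s = 3) (hβ : β ∈ Ioc (0:ℝ) 1)
    (f g h k : ℝ → ℝ)
    (ht : ∀ x u v : ℝ, 0 ≤ x → 0 ≤ u → 0 ≤ v → Real.cosh t ≤ coshMin x u v)
    (hf : IntegrableOn (fun x => |f x| ^ p) (Ioi 0))
    (hg : IntegrableOn (fun x => |g x| ^ q) (Ioi 0))
    (hh : IntegrableOn (fun x => |h x| ^ r * K0 (β * x)) (Ioi 0))
    (hk : IntegrableOn (fun x => |k x| ^ s) (Ioi 0)) :
    |∫ x in Ioi (0:ℝ), polyconv f g h x * k x| ≤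
      Real.sqrt (2 / Real.pi) * (1 / Real.cosh t) ^ (1 - 1/r) *
        (∫ x in Ioi (0:ℝ), |f x| ^ p) ^ (1/p) *
        (∫ x in Ioi (0:ℝ), |g x| ^ q) ^ (1/q) *
        (∫ x in Ioi (0:ℝ), |h x| ^ r * K0 (β * x)) ^ (1/r) *
        (∫ x in Ioi (0:ℝ), |k x| ^ s) ^ (1/s) := by
  have hK0 : 0 ≤ ∫ x in Ioi (0:ℝ), |h x| ^ r * K0 (β * x) :=
    integral_nonneg fun x => mul_nonneg (by positivity) (K0_nonneg _)
  have hr' : 0 ≤ 1 - 1 / r := sub_nonneg.2 ((div_le_one (by linarith)).2 hr.le)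
  rw [← ENNReal.ofReal_le_ofReal_iff (by positivity)]
  refine (ofReal_abs_integral_polyconv_mul_le hp.le hq.le hr.le hs.le hsum hβ ht hf hg hh
    hk).trans_eq ?_
  rw [ENNReal.ofReal_mul (by positivity), ENNReal.ofReal_mul (by positivity),
    ENNReal.ofReal_mul (by positivity), ENNReal.ofReal_mul (by positivity),
    ENNReal.ofReal_mul (by positivity), ENNReal.ofReal_rpow_of_nonneg (by positivity) hr',
    ENNReal.ofReal_rpow_of_nonneg (by positivity) (by positivity),
    ENNReal.ofReal_rpow_of_nonneg (by positivity) (by positivity),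
    ENNReal.ofReal_rpow_of_nonneg hK0 (by positivity),
    ENNReal.ofReal_rpow_of_nonneg (by positivity) (by positivity)]
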